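/- Let C be a finite set of N vectors in R^d with pairwise distances at most 2δ, let q ∈ R^d with ||q||_2 ≤ r, and let S be a multiset of t i.i.d. uniform samples from C. If t ≥ 3 ε^{-2} e^{2δr} log(2/η), then with probability at least 1 - η, (N/t)·Σ_{k∈S} exp(⟨q,k⟩) lies within a multiplicative factor (1 ± ε) of Σ_{k∈C} exp(⟨q,k⟩). -/

import Mathlib

open scoped RealInnerProductSpace
open MeasureTheory ProbabilityTheory Real InformationTheory Finset

/-!
The sample values `exp ⟪q, S j⟫` are i.i.d. with mean `μ = Z / N`, and since
`⟪q, k - k'⟫ ≤ 2δr` on `C` they are bounded by `B = e^{2δr} μ`. Bounding `exp (s x)` on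
`[0, B]` by its chord gives `E[exp (s X)] ≤ exp (μ (e^{sB} - 1) / B)`, and Chernoff's bound at
`s = log (1 ± ε) / B` bounds each tail of `∑ X_j` by `exp (-(t μ / B) klFun (1 ± ε))`, where
`klFun u = u log u + 1 - u ≥ (u - 1)² / 3` for `0 ≤ u ≤ 2`. As `t μ / B = t e^{-2δr}`, the
assumption on `t` makes each tail at most `η / 2`.
-/

lemma sq_sub_one_div_two_le_klFun {u : ℝ} (hu0 : 0 ≤ u) (hu1 : u ≤ 1) :
    (u - 1) ^ 2 / 2 ≤ klFun u := by
  suffices AntitoneOn (fun y => klFun y - (y - 1) ^ 2 / 2) (Set.Icc u 1) by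
    simpa [klFun_one] using this ⟨le_rfl, hu1⟩ ⟨hu1, le_rfl⟩ hu1
  refine antitoneOn_of_hasDerivWithinAt_nonpos (convex_Icc u 1) (by fun_prop [continuous_klFun])
    (f' := fun y => log y - (y - 1)) (fun y hy => ?_) fun y hy => ?_
  · rw [interior_Icc] at hy
    have hsq : HasDerivAt (fun y : ℝ => (y - 1) ^ 2 / 2) (y - 1) y :=
      ((((hasDerivAt_id' y).sub_const 1).fun_pow 2).div_const 2).congr_deriv (by norm_num)
    exact ((hasDerivAt_klFun (by linarith [hy.1])).sub hsq).hasDerivWithinAt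
  · rw [interior_Icc] at hy
    linarith [log_le_sub_one_of_pos (by linarith [hy.1] : 0 < y)]

lemma sq_sub_one_div_three_le_klFun_of_one_le {u : ℝ} (hu1 : 1 ≤ u) (hu2 : u ≤ 2) :
    (u - 1) ^ 2 / 3 ≤ klFun u := by
  obtain ⟨ε, hε, rfl⟩ : ∃ ε, 0 ≤ ε ∧ u = 1 + ε := ⟨u - 1, by linarith, by ring⟩
  have hlog := le_log_one_add_of_nonneg hε
  have key : ε ^ 2 / 3 ≤ (1 + ε) * (2 * ε / (ε + 2)) - ε := by
    rw [mul_div_assoc', div_sub' (by positivity), le_div_iff₀ (by positivity)]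
    nlinarith
  rw [klFun_apply]
  nlinarith [mul_le_mul_of_nonneg_left hlog (by linarith : (0:ℝ) ≤ 1 + ε)]

lemma sq_sub_one_div_three_le_klFun {u : ℝ} (hu0 : 0 ≤ u) (hu2 : u ≤ 2) :
    (u - 1) ^ 2 / 3 ≤ klFun u := by
  rcases le_total u 1 with hu1 | hu1
  · linarith [sq_sub_one_div_two_le_klFun hu0 hu1, sq_nonneg (u - 1)]
  · exact sq_sub_one_div_three_le_klFun_of_one_le hu1 hu2

lemma exp_mul_le_one_add_div_mul {x B : ℝ} (s : ℝ) (hB : 0 < B) (hx : x ∈ Set.Icc 0 B) :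
    exp (s * x) ≤ 1 + x / B * (exp (s * B) - 1) := by
  have hθ : x / B ∈ Set.Icc (0 : ℝ) 1 :=
    ⟨div_nonneg hx.1 hB.le, (div_le_one hB).2 hx.2⟩
  have h := convexOn_exp.2 (Set.mem_univ 0) (Set.mem_univ (s * B)) (sub_nonneg.2 hθ.2) hθ.1
    (by ring)
  have harg : (1 - x / B) • (0 : ℝ) + (x / B) • (s * B) = s * x := by
    simp only [smul_eq_mul, mul_zero, zero_add]; field_simp
  rw [harg] at h
  simp only [smul_eq_mul, exp_zero] at h
  linarith

section Chernoff

variable {α ι : Type*} [MeasurableSpace α] [Fintype ι] {ν : Measure α} {g : α → ℝ}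

lemma mgf_sum_pi [SigmaFinite ν] (s : ℝ) :
    mgf (fun x : ι → α => ∑ i, g (x i)) (Measure.pi fun _ => ν) s =
      mgf g ν s ^ Fintype.card ι := by
  simp_rw [mgf, mul_sum, exp_sum]
  exact integral_fintype_prod_eq_pow (ι := ι) (μ := ν) (fun a => exp (s * g a))

lemma integrable_exp_mul_sum_pi [SigmaFinite ν] {s : ℝ}
    (h : Integrable (fun a => exp (s * g a)) ν) :
    Integrable (fun x : ι → α => exp (s * ∑ i, g (x i))) (Measure.pi fun _ => ν) := by
  simp_rw [mul_sum, exp_sum]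
  exact Integrable.fintype_prod fun _ => h

variable [IsProbabilityMeasure ν] {B : ℝ}

lemma mgf_le_exp_integral_mul (hB : 0 < B) (hg : AEMeasurable g ν)
    (hgB : ∀ᵐ a ∂ν, g a ∈ Set.Icc 0 B) (s : ℝ) :
    mgf g ν s ≤ exp ((∫ a, g a ∂ν) / B * (exp (s * B) - 1)) := by
  have hint : Integrable g ν := .of_mem_Icc 0 B hg hgB
  calc mgf g ν s ≤ ∫ a, 1 + g a / B * (exp (s * B) - 1) ∂ν :=
        integral_mono_ae (integrable_exp_mul_of_mem_Icc hg hgB)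
          ((integrable_const 1).add ((hint.div_const B).mul_const _))
          (hgB.mono fun a ha => exp_mul_le_one_add_div_mul s hB ha)
    _ = (∫ a, g a ∂ν) / B * (exp (s * B) - 1) + 1 := by
        rw [integral_add (integrable_const 1) ((hint.div_const B).mul_const _), integral_const,
          integral_mul_const, integral_div]
        simp [add_comm]
    _ ≤ _ := add_one_le_exp _

lemma exp_neg_mul_mgf_sum_pi_le (hB : 0 < B) (hg : AEMeasurable g ν)
    (hgB : ∀ᵐ a ∂ν, g a ∈ Set.Icc 0 B) {u : ℝ} (hu : 0 < u) :
    exp (-(log u / B) * (u * (Fintype.card ι * ∫ a, g a ∂ν))) *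
        mgf (fun x : ι → α => ∑ i, g (x i)) (Measure.pi fun _ => ν) (log u / B) ≤
      exp (-(Fintype.card ι * (∫ a, g a ∂ν) / B) * klFun u) := by
  rw [mgf_sum_pi]
  calc _ ≤ exp (-(log u / B) * (u * (Fintype.card ι * ∫ a, g a ∂ν))) *
        exp ((∫ a, g a ∂ν) / B * (exp (log u / B * B) - 1)) ^ Fintype.card ι := by
        gcongr
        exacts [mgf_nonneg, mgf_le_exp_integral_mul hB hg hgB _]
    _ = _ := by
        rw [← exp_nat_mul, ← exp_add, div_mul_cancel₀ _ hB.ne', exp_log hu, klFun_apply]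
        congr 1
        field_simp
        ring

lemma measureReal_pi_mul_le_sum_le (hB : 0 < B) (hg : AEMeasurable g ν)
    (hgB : ∀ᵐ a ∂ν, g a ∈ Set.Icc 0 B) {u : ℝ} (hu : 1 ≤ u) :
    (Measure.pi fun _ => ν).real
        {x : ι → α | u * (Fintype.card ι * ∫ a, g a ∂ν) ≤ ∑ i, g (x i)} ≤
      exp (-(Fintype.card ι * (∫ a, g a ∂ν) / B) * klFun u) :=
  (measure_ge_le_exp_mul_mgf _ (div_nonneg (log_nonneg hu) hB.le)
    (integrable_exp_mul_sum_pi (integrable_exp_mul_of_mem_Icc hg hgB))).trans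
    (exp_neg_mul_mgf_sum_pi_le hB hg hgB (by linarith))

lemma measureReal_pi_sum_le_mul_le (hB : 0 < B) (hg : AEMeasurable g ν)
    (hgB : ∀ᵐ a ∂ν, g a ∈ Set.Icc 0 B) {u : ℝ} (hu0 : 0 < u) (hu1 : u ≤ 1) :
    (Measure.pi fun _ => ν).real
        {x : ι → α | ∑ i, g (x i) ≤ u * (Fintype.card ι * ∫ a, g a ∂ν)} ≤
      exp (-(Fintype.card ι * (∫ a, g a ∂ν) / B) * klFun u) :=
  (measure_le_le_exp_mul_mgf _ (div_nonpos_of_nonpos_of_nonneg (log_nonpos hu0.le hu1) hB.le)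
    (integrable_exp_mul_sum_pi (integrable_exp_mul_of_mem_Icc hg hgB))).trans
    (exp_neg_mul_mgf_sum_pi_le hB hg hgB hu0)

theorem one_sub_two_mul_exp_le_measureReal_pi_abs_sum_sub_le (hB : 0 < B)
    (hg : AEMeasurable g ν) (hgB : ∀ᵐ a ∂ν, g a ∈ Set.Icc 0 B) {ε : ℝ} (hε0 : 0 < ε)
    (hε1 : ε < 1) :
    1 - 2 * exp (-(Fintype.card ι * (∫ a, g a ∂ν) / B) * (ε ^ 2 / 3)) ≤
      (Measure.pi fun _ => ν).real
        {x : ι → α | |∑ i, g (x i) - Fintype.card ι * ∫ a, g a ∂ν| ≤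
          ε * (Fintype.card ι * ∫ a, g a ∂ν)} := by
  have hupper := measureReal_pi_mul_le_sum_le hB hg hgB (ι := ι) (by linarith : 1 ≤ 1 + ε)
  have hlower := measureReal_pi_sum_le_mul_le hB hg hgB (ι := ι) (by linarith : 0 < 1 - ε)
    (by linarith)
  set P := Measure.pi fun _ : ι => ν
  set M := Fintype.card ι * ∫ a, g a ∂ν
  have hM : 0 ≤ M := by
    have := integral_nonneg_of_ae (hgB.mono fun a ha => ha.1)
    positivity
  have hrate {u : ℝ} (hu0 : 0 ≤ u) (hu2 : u ≤ 2) (hu : (u - 1) ^ 2 = ε ^ 2) :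
      exp (-(M / B) * klFun u) ≤ exp (-(M / B) * (ε ^ 2 / 3)) :=
    exp_le_exp.2 (mul_le_mul_of_nonpos_left (hu ▸ sq_sub_one_div_three_le_klFun hu0 hu2)
      (neg_nonpos.2 (div_nonneg hM hB.le)))
  have hcover : Set.univ ⊆ {x : ι → α | |∑ i, g (x i) - M| ≤ ε * M} ∪
      ({x | (1 + ε) * M ≤ ∑ i, g (x i)} ∪ {x | ∑ i, g (x i) ≤ (1 - ε) * M}) := by
    intro x _
    simp only [Set.mem_union, Set.mem_ofPred_eq]
    by_contra! h
    cases lt_abs.1 h.1 <;> linarith [h.2.1, h.2.2]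
  have hupper_rate := hrate (u := 1 + ε) (by linarith) (by linarith) (by ring)
  have hlower_rate := hrate (u := 1 - ε) (by linarith) (by linarith) (by ring)
  have hunion := (measureReal_mono (μ := P) hcover).trans ((measureReal_union_le _ _).trans
    (add_le_add_right (measureReal_union_le _ _) _))
  rw [probReal_univ] at hunion
  linarith

end Chernoff

namespace PMF

variable {α : Type*} [MeasurableSpace α] [MeasurableSingletonClass α] {s : Finset α}

lemma ae_mem_uniformOfFinset (hs : s.Nonempty) :
    ∀ᵐ a ∂(uniformOfFinset s hs).toMeasure, a ∈ s := by
  rw [ae_iff]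
  exact (toMeasure_apply_eq_zero_iff _ s.measurableSet.compl).2
    (by simp [support_uniformOfFinset, disjoint_compl_right])

lemma integral_uniformOfFinset (hs : s.Nonempty) {f : α → ℝ}
    (hf : Integrable f (uniformOfFinset s hs).toMeasure) :
    ∫ a, f a ∂(uniformOfFinset s hs).toMeasure = (∑ a ∈ s, f a) / #s := by
  rw [integral_eq_tsum _ _ hf, tsum_eq_sum (s := s) fun a ha => by simp [ha], sum_div]
  refine sum_congr rfl fun a ha => ?_
  simp [uniformOfFinset_apply_of_mem hs ha, div_eq_inv_mul]

end PMF

section InnerProductSpace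

variable {E : Type*} [NormedAddCommGroup E] [InnerProductSpace ℝ E]

lemma exp_inner_le_exp_mul_exp_inner (q k k' : E) :
    exp ⟪q, k⟫ ≤ exp (‖q‖ * dist k k') * exp ⟪q, k'⟫ := by
  rw [← exp_add, exp_le_exp, dist_eq_norm, ← sub_le_iff_le_add, ← inner_sub_right]
  exact real_inner_le_norm _ _

lemma exp_inner_le_exp_mul_sum_div_card {C : Finset E} {q k : E} {D r : ℝ} (hk : k ∈ C)
    (hdiam : ∀ k' ∈ C, dist k k' ≤ D) (hq : ‖q‖ ≤ r) :
    exp ⟪q, k⟫ ≤ exp (D * r) * (∑ k' ∈ C, exp ⟪q, k'⟫) / #C := by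
  have hpos : (0 : ℝ) < #C := by exact_mod_cast card_pos.2 ⟨k, hk⟩
  rw [le_div_iff₀ hpos, mul_sum, mul_comm, ← nsmul_eq_mul]
  refine card_nsmul_le_sum _ _ _ fun k' hk' => (exp_inner_le_exp_mul_exp_inner q k k').trans ?_
  gcongr exp ?_ * _
  exact (mul_le_mul hq (hdiam k' hk') dist_nonneg ((norm_nonneg q).trans hq)).trans_eq
    (mul_comm _ _)

end InnerProductSpace

lemma two_mul_exp_neg_div_mul_le {a ε η t : ℝ} (ha : 0 < a) (hε : ε ≠ 0) (hη : 0 < η)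
    (ht : 3 * ε⁻¹ ^ 2 * a * log (2 / η) ≤ t) :
    2 * exp (-(t / a) * (ε ^ 2 / 3)) ≤ η := by
  have hlog : log (2 / η) ≤ t / a * (ε ^ 2 / 3) := by
    rw [div_mul_eq_mul_div, le_div_iff₀ ha]
    field_simp at ht
    rw [div_le_iff₀ (by positivity)] at ht
    linarith
  calc 2 * exp (-(t / a) * (ε ^ 2 / 3)) ≤ 2 * exp (-log (2 / η)) := by gcongr; linarith
    _ = η := by rw [exp_neg, exp_log (by positivity)]; field_simp

lemma abs_div_mul_sub_le_of_abs_sub_le {N t x Z ε : ℝ} (hN : 0 < N) (ht : 0 < t)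
    (h : |x - t * (Z / N)| ≤ ε * (t * (Z / N))) : |N / t * x - Z| ≤ ε * Z := by
  have hfactor : N / t * x - Z = N / t * (x - t * (Z / N)) := by field_simp
  rw [hfactor, abs_mul, abs_of_pos (by positivity)]
  calc N / t * |x - t * (Z / N)| ≤ N / t * (ε * (t * (Z / N))) := by gcongr
    _ = ε * Z := by field_simp

theorem uniform_sampling_partition_function_estimate_general {d t : ℕ} (δ r ε η : ℝ)
    (hε : ε ∈ Set.Ioo (0 : ℝ) 1) (hη : η ∈ Set.Ioo (0 : ℝ) 1)
    (C : Finset (EuclideanSpace ℝ (Fin d))) (hC : C.Nonempty)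
    (hdiam : ∀ k ∈ C, ∀ k' ∈ C, dist k k' ≤ 2 * δ)
    (q : EuclideanSpace ℝ (Fin d)) (hq : ‖q‖ ≤ r)
    (ht : 3 * ε⁻¹ ^ 2 * Real.exp (2 * δ * r) * Real.log (2 / η) ≤ (t : ℝ)) :
    ENNReal.ofReal (1 - η) ≤
      (Measure.pi fun _ : Fin t => (PMF.uniformOfFinset C hC).toMeasure)
        {S : Fin t → EuclideanSpace ℝ (Fin d) |
          |((C.card : ℝ) / (t : ℝ)) * ∑ j, Real.exp ⟪q, S j⟫ -
              ∑ k ∈ C, Real.exp ⟪q, k⟫| ≤ ε * ∑ k ∈ C, Real.exp ⟪q, k⟫} := by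
  obtain ⟨hε0, hε1⟩ := hε
  obtain ⟨hη0, hη1⟩ := hη
  set ν := (PMF.uniformOfFinset C hC).toMeasure
  set Z := ∑ k ∈ C, exp ⟪q, k⟫
  have hZ : 0 < Z := sum_pos (fun k _ => exp_pos _) hC
  set B := exp (2 * δ * r) * Z / #C
  have hbound : ∀ᵐ k ∂ν, exp ⟪q, k⟫ ∈ Set.Icc 0 B :=
    (PMF.ae_mem_uniformOfFinset hC).mono fun k hk =>
      ⟨(exp_pos _).le, exp_inner_le_exp_mul_sum_div_card hk (hdiam k hk) hq⟩
  have hmeas : AEMeasurable (fun k => exp ⟪q, k⟫) ν := by fun_prop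
  have hmean : ∫ k, exp ⟪q, k⟫ ∂ν = Z / #C :=
    PMF.integral_uniformOfFinset hC (.of_mem_Icc 0 B hmeas hbound)
  have hchernoff := one_sub_two_mul_exp_le_measureReal_pi_abs_sum_sub_le (ι := Fin t)
    (by positivity : 0 < B) hmeas hbound hε0 hε1
  have hrate : t * (Z / #C) / B = t / exp (2 * δ * r) := by simp only [B]; field_simp
  rw [Fintype.card_fin, hmean, hrate] at hchernoff
  have htail := two_mul_exp_neg_div_mul_le (exp_pos _) hε0.ne' hη0 ht
  have hlog : 0 < log (2 / η) := log_pos ((one_lt_div hη0).2 (by linarith))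
  have ht0 : (0 : ℝ) < t := lt_of_lt_of_le (by positivity) ht
  refine ENNReal.ofReal_le_of_le_toReal ((by linarith : 1 - η ≤ _).trans
    (hchernoff.trans (measureReal_mono fun S hS => ?_)))
  exact abs_div_mul_sub_le_of_abs_sub_le (by exact_mod_cast hC.card_pos) ht0 hS

/-- Chernoff–Hoeffding estimate for the cluster partition-function sum: if `C` is a finite
set of vectors with pairwise distances at most `2δ`, `‖q‖ ≤ r`, and `S` consists of
`t ≥ 3 ε⁻² e^{2δr} log(2/η)` i.i.d. uniform samples from `C`, then with probability at
least `1 - η` the scaled empirical sum `(|C|/t)·Σ_{j} exp⟨q, S j⟩` is within a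
multiplicative factor `1 ± ε` of `Σ_{k ∈ C} exp⟨q, k⟩`. -/
theorem uniform_sampling_partition_function_estimate {d t : ℕ} (δ r ε η : ℝ)
    (hδ : 0 < δ) (hr : 0 < r) (hε : ε ∈ Set.Ioo (0 : ℝ) 1) (hη : η ∈ Set.Ioo (0 : ℝ) 1)
    (C : Finset (EuclideanSpace ℝ (Fin d))) (hC : C.Nonempty)
    (hdiam : ∀ k ∈ C, ∀ k' ∈ C, dist k k' ≤ 2 * δ)
    (q : EuclideanSpace ℝ (Fin d)) (hq : ‖q‖ ≤ r)
    (ht : 3 * ε⁻¹ ^ 2 * Real.exp (2 * δ * r) * Real.log (2 / η) ≤ (t : ℝ)) :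
    ENNReal.ofReal (1 - η) ≤
      (Measure.pi fun _ : Fin t => (PMF.uniformOfFinset C hC).toMeasure)
        {S : Fin t → EuclideanSpace ℝ (Fin d) |
          |((C.card : ℝ) / (t : ℝ)) * ∑ j, Real.exp ⟪q, S j⟫ -
              ∑ k ∈ C, Real.exp ⟪q, k⟫| ≤ ε * ∑ k ∈ C, Real.exp ⟪q, k⟫} :=
  uniform_sampling_partition_function_estimate_general δ r ε η hε hη C hC hdiam q hq ht
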